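/- Let K/F be a finite Galois extension whose Galois group is cyclic, and let x, y ∈ K satisfy K = F[x, y]. Let a and b be the degrees of x and y over F, let d = gcd(a, b), m = a/d, n = b/d, and assume that every prime factor of d divides mn. Then K = F[αx + βy] for all nonzero α, β ∈ F. In particular this holds whenever d divides mn. -/

import Mathlib

/-!
If `F⟮αx + βy⟯ ≠ K`, its fixing group contains an automorphism `σ` of prime order `p`. As `σ`
fixes `αx + βy` but not both generators `x` and `y`, it fixes neither of them. In a cyclic group
every element whose order divides `k` lies in the subgroup of order `k`, so `p` divides neither
`[K : F⟮x⟯]` nor `[K : F⟮y⟯]`. Hence `a`, `b` and `[K : F]` have the same `p`-adic valuation,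
which is positive; so `p ∣ d`, while `p` divides neither `m` nor `n`.
-/

open IntermediateField Module

/-- `H` supplies `Nat.card H` solutions of `g ^ Nat.card H = 1`, and a cyclic group has no more. -/
theorem IsCyclic.mem_subgroup_of_orderOf_dvd_natCard {G : Type*} [Group G] [Finite G]
    [IsCyclic G] {H : Subgroup G} {g : G} (hg : orderOf g ∣ Nat.card H) : g ∈ H := by
  classical
  have := Fintype.ofFinite G
  let S : Finset G := {a | a ^ Nat.card H = 1}
  have hHS : (H : Set G).toFinset ⊆ S := fun a ha ↦ by
    rw [Set.mem_toFinset] at ha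
    simpa only [S, Finset.mem_filter_univ] using
      orderOf_dvd_iff_pow_eq_one.mp (H.orderOf_dvd_natCard ha)
  have hSH : S.card ≤ (H : Set G).toFinset.card := by
    rw [← Nat.card_eq_card_toFinset]
    exact IsCyclic.card_pow_eq_one_le Nat.card_pos
  have hgS : g ∈ S := by
    simpa only [S, Finset.mem_filter_univ] using orderOf_dvd_iff_pow_eq_one.mp hg
  rw [← Finset.eq_of_subset_of_card_le hHS hSH, Set.mem_toFinset] at hgS
  exact hgS

theorem Nat.factorization_mul_of_not_dvd {p a c : ℕ} (ha : a ≠ 0) (hc : ¬p ∣ c) :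
    (a * c).factorization p = a.factorization p := by
  have hc0 : c ≠ 0 := by rintro rfl; exact hc (dvd_zero p)
  rw [Nat.factorization_mul ha hc0, Finsupp.add_apply, Nat.factorization_eq_zero_of_not_dvd hc,
    add_zero]

theorem Nat.Prime.not_dvd_of_eq_mul_gcd {p a b m : ℕ} (hp : p.Prime) (ha : a ≠ 0) (hb : b ≠ 0)
    (hab : a.factorization p = b.factorization p) (hm : a = m * Nat.gcd a b) : ¬p ∣ m := by
  have hm0 : m ≠ 0 := by rintro rfl; exact ha (by simpa using hm)
  have hv := congrArg (·.factorization p) hm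
  simp only [Nat.factorization_mul hm0 (Nat.gcd_ne_zero_left ha), Finsupp.add_apply,
    Nat.factorization_gcd ha hb, Finsupp.inf_apply, hab, min_self] at hv
  rw [hp.dvd_iff_one_le_factorization hm0]
  omega

namespace IntermediateField

variable {F K : Type*} [Field F] [Field K] [Algebra F K]

theorem mem_fixingSubgroup_adjoin_iff (σ : K ≃ₐ[F] K) (s : Set K) :
    σ ∈ (adjoin F s).fixingSubgroup ↔ ∀ t ∈ s, σ t = t := by
  rw [mem_fixingSubgroup_iff]
  refine ⟨fun h t ht ↦ h t (subset_adjoin F s ht), fun h t ht ↦ ?_⟩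
  exact (adjoin_le_iff.mpr h : adjoin F s ≤ FixedBy.intermediateField F K σ) ht

theorem mem_fixingSubgroup_adjoin_simple_iff (σ : K ≃ₐ[F] K) (t : K) :
    σ ∈ F⟮t⟯.fixingSubgroup ↔ σ t = t :=
  (mem_fixingSubgroup_adjoin_iff σ {t}).trans (by simp only [Set.mem_singleton_iff, forall_eq])

theorem apply_ne_self_of_apply_smul_add_smul_eq {x y : K} (hK : adjoin F {x, y} = ⊤) {α β : F}
    (hα : α ≠ 0) (hβ : β ≠ 0) {σ : K ≃ₐ[F] K} (hσ : σ ≠ 1)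
    (hz : σ (α • x + β • y) = α • x + β • y) : σ x ≠ x ∧ σ y ≠ y := by
  rw [map_add, map_smul, map_smul] at hz
  have hxy : σ x = x ↔ σ y = y := by
    constructor
    · intro hx
      rw [hx] at hz
      exact smul_right_injective K hβ (add_left_cancel hz)
    · intro hy
      rw [hy] at hz
      exact smul_right_injective K hα (add_right_cancel hz)
  have hx : σ x ≠ x := fun hx ↦ hσ <| by
    rw [← Subgroup.mem_bot, ← fixingSubgroup_top, ← hK, mem_fixingSubgroup_adjoin_iff]
    rintro t (rfl | rfl)
    exacts [hx, hxy.mp hx]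
  exact ⟨hx, mt hxy.mpr hx⟩

variable [FiniteDimensional F K] [IsGalois F K]

theorem exists_prime_orderOf_mem_fixingSubgroup {E : IntermediateField F K} (hE : E ≠ ⊤) :
    ∃ σ ∈ E.fixingSubgroup, (orderOf σ).Prime := by
  have hfix : E.fixingSubgroup ≠ ⊥ := fun h ↦ hE <| by
    rw [← IsGalois.fixedField_fixingSubgroup E, h, fixedField_bot]
  have hp := Nat.minFac_prime (E.fixingSubgroup.one_lt_card_iff_ne_bot.mpr hfix).ne'
  have := Fact.mk hp
  obtain ⟨σ, hσ⟩ := exists_prime_orderOf_dvd_card' _ (Nat.minFac_dvd (Nat.card E.fixingSubgroup))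
  exact ⟨σ, σ.2, by rwa [Subgroup.orderOf_coe, hσ]⟩

theorem mem_fixingSubgroup_iff_orderOf_dvd_finrank [IsCyclic (K ≃ₐ[F] K)]
    (E : IntermediateField F K) (σ : K ≃ₐ[F] K) :
    σ ∈ E.fixingSubgroup ↔ orderOf σ ∣ finrank E K := by
  rw [← IsGalois.card_fixingSubgroup_eq_finrank]
  exact ⟨E.fixingSubgroup.orderOf_dvd_natCard, IsCyclic.mem_subgroup_of_orderOf_dvd_natCard⟩

theorem factorization_finrank_adjoin_simple_eq_of_apply_ne [IsCyclic (K ≃ₐ[F] K)]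
    {σ : K ≃ₐ[F] K} {t : K} (ht : σ t ≠ t) :
    (finrank F F⟮t⟯).factorization (orderOf σ) = (finrank F K).factorization (orderOf σ) := by
  rw [← finrank_mul_finrank F F⟮t⟯ K, Nat.factorization_mul_of_not_dvd finrank_pos.ne']
  rwa [← mem_fixingSubgroup_iff_orderOf_dvd_finrank, mem_fixingSubgroup_adjoin_simple_iff]

end IntermediateField

/-- **Theorem (t), cyclic case.** Let `K/F` be a finite Galois extension with cyclic
Galois group, and let `x, y ∈ K` satisfy `K = F[x, y]`.  Let `a, b` be the degrees of
`x, y` over `F`, `d = gcd(a, b)`, `m = a/d`, `n = b/d`, and assume every prime factor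
of `d` divides `mn`.  Then `K = F[αx + βy]` for all nonzero `α, β ∈ F`. -/
theorem stmt5 (F K : Type*) [Field F] [Field K] [Algebra F K]
    [FiniteDimensional F K] [IsGalois F K]
    (hcyc : IsCyclic (K ≃ₐ[F] K))
    (x y : K) (hK : IntermediateField.adjoin F {x, y} = ⊤)
    (a b d m n : ℕ)
    (ha : Module.finrank F (IntermediateField.adjoin F {x}) = a)
    (hb : Module.finrank F (IntermediateField.adjoin F {y}) = b)
    (hd : d = Nat.gcd a b) (hm : a = m * d) (hn : b = n * d)
    (hp : ∀ p : ℕ, p.Prime → p ∣ d → p ∣ m * n) :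
    ∀ α β : F, α ≠ 0 → β ≠ 0 →
      IntermediateField.adjoin F {α • x + β • y} = ⊤ := by
  intro α β hα hβ
  by_contra hz
  obtain ⟨σ, hσz, hσp⟩ := exists_prime_orderOf_mem_fixingSubgroup hz
  have hσ1 : σ ≠ 1 := by rintro rfl; exact Nat.not_prime_one (by simpa using hσp)
  obtain ⟨hσx, hσy⟩ := apply_ne_self_of_apply_smul_add_smul_eq hK hα hβ hσ1
    ((mem_fixingSubgroup_adjoin_simple_iff σ _).mp hσz)
  have hva := ha ▸ factorization_finrank_adjoin_simple_eq_of_apply_ne hσx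
  have hvb := hb ▸ factorization_finrank_adjoin_simple_eq_of_apply_ne hσy
  have hvK : 1 ≤ (finrank F K).factorization (orderOf σ) :=
    hσp.factorization_pos_of_dvd finrank_pos.ne' <|
      IsGalois.card_aut_eq_finrank F K ▸ orderOf_dvd_natCard σ
  have ha0 : a ≠ 0 := ha ▸ finrank_pos.ne'
  have hb0 : b ≠ 0 := hb ▸ finrank_pos.ne'
  have hpd : orderOf σ ∣ d := hd ▸ Nat.dvd_gcd
    ((hσp.dvd_iff_one_le_factorization ha0).mpr (hva ▸ hvK))
    ((hσp.dvd_iff_one_le_factorization hb0).mpr (hvb ▸ hvK))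
  subst hd
  rcases hσp.dvd_mul.mp (hp _ hσp hpd) with hpm | hpn
  · exact hσp.not_dvd_of_eq_mul_gcd ha0 hb0 (hva.trans hvb.symm) hm hpm
  · exact hσp.not_dvd_of_eq_mul_gcd hb0 ha0 (hvb.trans hva.symm) (Nat.gcd_comm a b ▸ hn) hpn
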